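/- arXiv:1812.10707 — 5 statements merged into one kernel-verified Lean document; each statement's English description precedes it below -/
import Mathlib

section
/- Fix 0 < φ < π and t > 0, and define the plane curve z(s) := 1/(1/(s e^{iφ}) − t) = s e^{iφ}/(1 − t s e^{iφ}) for s > 0. Then the signed curvature κ(s) = Re(i z'(s) conj(z''(s)))/|z'(s)|³ is strictly positive for all s > 0; in particular κ(s)·|z'(s)|³ = 2 t sin(φ)/((st − cos φ)² + sin²φ)³ > 0, so the curve is convex. -/
/-!
With `a = exp (φ * I)` and `d = 1 - t s a`, the curve is `z = η(t, s a)`, so `z' = a / d ^ 2` and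
`z'' = 2 t a ^ 2 / d ^ 3`. Since `a * conj a = 1`, `I z' conj z'' = 2 t I (conj a * d) / |d| ^ 6`
and `conj a * d = conj a - t s`, whose product with `I` has real part `Im a = sin φ > 0`.
-/

open Complex Real ComplexConjugate

section
variable (a c : ℂ)

theorem hasDerivAt_one_sub_mul_ofReal_mul (s : ℝ) :
    HasDerivAt (fun s : ℝ => 1 - c * s * a) (-(c * a)) s := by
  simpa using (((hasDerivAt_id s).ofReal_comp.const_mul c).mul_const a).const_sub 1

theorem hasDerivAt_ofReal_mul_div_one_sub {s : ℝ} (h : 1 - c * s * a ≠ 0) :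
    HasDerivAt (fun s : ℝ => s * a / (1 - c * s * a)) (a / (1 - c * s * a) ^ 2) s := by
  have hnum : HasDerivAt (fun s : ℝ => (s : ℂ) * a) a s := by
    simpa using (hasDerivAt_id s).ofReal_comp.mul_const a
  refine (hnum.div (hasDerivAt_one_sub_mul_ofReal_mul a c s) h).congr_deriv ?_
  field_simp
  ring

theorem hasDerivAt_div_one_sub_sq {s : ℝ} (h : 1 - c * s * a ≠ 0) :
    HasDerivAt (fun s : ℝ => a / (1 - c * s * a) ^ 2) (2 * c * a ^ 2 / (1 - c * s * a) ^ 3) s := by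
  refine ((hasDerivAt_const s a).div ((hasDerivAt_one_sub_mul_ofReal_mul a c s).pow 2)
    (pow_ne_zero 2 h)).congr_deriv ?_
  simp only [Pi.pow_apply]
  field_simp
  ring

theorem deriv_ofReal_mul_div_one_sub (h : ∀ s : ℝ, 1 - c * s * a ≠ 0) :
    deriv (fun s : ℝ => s * a / (1 - c * s * a)) = fun s : ℝ => a / (1 - c * s * a) ^ 2 :=
  funext fun s => (hasDerivAt_ofReal_mul_div_one_sub a c (h s)).deriv

theorem deriv_div_one_sub_sq (h : ∀ s : ℝ, 1 - c * s * a ≠ 0) :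
    deriv (fun s : ℝ => a / (1 - c * s * a) ^ 2) =
      fun s : ℝ => 2 * c * a ^ 2 / (1 - c * s * a) ^ 3 :=
  funext fun s => (hasDerivAt_div_one_sub_sq a c (h s)).deriv

end

theorem one_sub_ofReal_mul_ne_zero {a : ℂ} (ha : a.im ≠ 0) (r : ℝ) : 1 - r * a ≠ 0 := by
  intro h
  have him : r * a.im = 0 := by simpa using congrArg im h
  have hre : 1 - r * a.re = 0 := by simpa using congrArg re h
  rcases mul_eq_zero.1 him with rfl | h0
  · simp at hre
  · exact ha h0

theorem re_I_mul_div_sq_mul_conj_div_cube {a : ℂ} (ha : a * conj a = 1) (t s : ℝ)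
    (h : 1 - t * s * a ≠ 0) :
    (I * (a / (1 - t * s * a) ^ 2) * conj (2 * t * a ^ 2 / (1 - t * s * a) ^ 3)).re =
      2 * t * a.im / normSq (1 - t * s * a) ^ 3 := by
  set d := 1 - t * s * a
  have hdc : conj d ≠ 0 := (map_ne_zero _).mpr h
  have hw : conj a * d = conj a - t * s := by linear_combination (-(t * s : ℂ)) * ha
  have hkey : I * (a / d ^ 2) * conj (2 * t * a ^ 2 / d ^ 3) =
      ((2 * t / normSq d ^ 3 : ℝ) : ℂ) * (I * (conj a - t * s)) :=
    calc I * (a / d ^ 2) * conj (2 * t * a ^ 2 / d ^ 3)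
        = 2 * t * I * (conj a * d) * (a * conj a) / (d * conj d) ^ 3 := by
          simp only [map_div₀, map_mul, map_pow, conj_ofReal, map_ofNat]
          field_simp
      _ = ((2 * t / normSq d ^ 3 : ℝ) : ℂ) * (I * (conj a - t * s)) := by
          rw [hw, ha, mul_conj]
          push_cast
          ring
  rw [hkey, re_ofReal_mul, I_mul_re, sub_im, conj_im, ← ofReal_mul, ofReal_im]
  ring

theorem normSq_one_sub_ofReal_mul_exp (φ r : ℝ) :
    normSq (1 - r * exp (φ * I)) = (r - Real.cos φ) ^ 2 + Real.sin φ ^ 2 := by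
  rw [normSq_apply]
  simp only [sub_re, one_re, mul_re, ofReal_re, exp_ofReal_mul_I_re, ofReal_im,
    exp_ofReal_mul_I_im, zero_mul, sub_zero, sub_im, one_im, mul_im, add_zero, zero_sub, mul_neg,
    neg_mul, neg_neg]
  linear_combination (r ^ 2 - 1) * Real.sin_sq_add_cos_sq φ

/-- Convexity of the image of the half-line s e^{iφ} under the time-t map of u' = u²:
    the (unnormalized) curvature Re(i z'(s) conj(z''(s))) equals
    2 t sin φ / ((st - cos φ)² + sin² φ)³ and is strictly positive. -/
theorem image_curve_convex (φ t : ℝ) (hφ0 : 0 < φ) (hφπ : φ < Real.pi) (ht : 0 < t)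
    (z : ℝ → ℂ)
    (hz : ∀ s : ℝ, z s = (s : ℂ) * Complex.exp (φ * Complex.I) /
      (1 - (t : ℂ) * s * Complex.exp (φ * Complex.I))) :
    ∀ s : ℝ, 0 < s →
      (Complex.I * deriv z s * (starRingEnd ℂ) (deriv (deriv z) s)).re =
        2 * t * Real.sin φ / (((s * t - Real.cos φ) ^ 2 + Real.sin φ ^ 2) ^ 3) ∧
      0 < (Complex.I * deriv z s * (starRingEnd ℂ) (deriv (deriv z) s)).re := by
  obtain rfl : z = _ := funext hz
  set a := exp (φ * I)
  have ha_im : a.im = Real.sin φ := exp_ofReal_mul_I_im φ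
  have ha : a * conj a = 1 := by rw [mul_conj', norm_exp_ofReal_mul_I]; simp
  have hsin : 0 < Real.sin φ := Real.sin_pos_of_pos_of_lt_pi hφ0 hφπ
  have hd (s : ℝ) : 1 - t * s * a ≠ 0 := by
    simpa using one_sub_ofReal_mul_ne_zero (ha_im ▸ hsin.ne') (t * s)
  intro s _
  rw [deriv_ofReal_mul_div_one_sub a t hd, deriv_div_one_sub_sq a t hd,
    re_I_mul_div_sq_mul_conj_div_cube ha t s (hd s), ha_im,
    show (t : ℂ) * s = ((s * t : ℝ) : ℂ) by push_cast; ring, normSq_one_sub_ofReal_mul_exp]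
  exact ⟨rfl, by positivity⟩
end

section
/- Let u₀ = v₀ + i w₀ : [−1,1] → ℂ be C¹ with u₀(±1) = 0, w₀(x) > 0 on (−1,1), and w₀'(−1) > 0, w₀'(1) < 0. Then R* := sup_{x ∈ (−1,1)} (v₀(x)² + w₀(x)²)/(2 w₀(x)) is finite; i.e., the curve x ↦ (v₀(x), w₀(x)) is contained in a closed disk of finite radius R* tangent to the real axis at the origin, centered at i R*. -/
/-!
Near an endpoint `a` the curve is within `o(|x - a|)` of its tangent line `(x - a) u₀'(a)`, so
`|u₀(x)| = O(|x - a|)` while the Hopf condition gives `w₀(x) ≥ c |x - a|`; hence the radius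
`|u₀|² / (2 w₀)` is `O(|x - a|)` there. On the rest of `[-1, 1]` it is continuous, and
compactness of `[-1, 1]` turns these local bounds into a global one.
-/

open Set Filter Topology

/-- The radius `R(y, z) = (y² + z²) / (2z)` of the circle through `0` and `y + iz` centred on
the imaginary axis. -/
noncomputable def solutionRadius (z : ℂ) : ℝ := (z.re ^ 2 + z.im ^ 2) / (2 * z.im)

lemma continuousAt_solutionRadius {z : ℂ} (hz : z.im ≠ 0) : ContinuousAt solutionRadius z := by
  unfold solutionRadius
  exact ContinuousAt.div (by fun_prop) (by fun_prop) (by simpa using hz)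

lemma solutionRadius_le {z : ℂ} {L c t : ℝ} (hc : 0 < c) (ht : 0 < t) (hnorm : ‖z‖ ≤ L * t)
    (him : c * t ≤ z.im) : solutionRadius z ≤ L ^ 2 * t / (2 * c) := by
  have him_pos : 0 < z.im := (mul_pos hc ht).trans_le him
  have hsq : z.re ^ 2 + z.im ^ 2 = ‖z‖ ^ 2 := by
    rw [Complex.sq_norm, Complex.normSq_apply]; ring
  calc solutionRadius z = ‖z‖ ^ 2 / (2 * z.im) := by rw [solutionRadius, hsq]
    _ ≤ (L * t) ^ 2 / (2 * (c * t)) := by gcongr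
    _ = L ^ 2 * t / (2 * c) := by field_simp

theorem IsCompact.bddAbove_image_of_isBoundedUnder {X α : Type*} [TopologicalSpace X]
    [Preorder α] [IsDirectedOrder α] [Nonempty α] {f : X → α} {K S : Set X} (hK : IsCompact K)
    (hSK : S ⊆ K) (hf : ∀ x ∈ K, IsBoundedUnder (· ≤ ·) (𝓝[S] x) f) : BddAbove (f '' S) := by
  suffices BddAbove (f '' (K ∩ S)) by rwa [inter_eq_right.2 hSK] at this
  refine hK.induction_on (p := fun t => BddAbove (f '' (t ∩ S))) (by simp)
    (fun s t hst ht => ht.mono (image_mono (inter_subset_inter_left S hst)))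
    (fun s t hs ht => by simpa only [union_inter_distrib_right, image_union] using hs.union ht)
    fun x hx => ?_
  obtain ⟨C, hC⟩ := hf x hx
  refine ⟨{y | y ∈ S → f y ≤ C}, mem_nhdsWithin_of_mem_nhds (eventually_nhdsWithin_iff.1 hC),
    C, ?_⟩
  rintro _ ⟨y, ⟨hyC, hyS⟩, rfl⟩
  exact hyC hyS

theorem isBoundedUnder_solutionRadius_of_hasDerivAt {u : ℝ → ℂ} {u' : ℂ} {a : ℝ} {s : Set ℝ}
    (hu : HasDerivAt u u' a) (ha : u a = 0) (him : u'.im ≠ 0)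
    (hs : ∀ x ∈ s, 0 < u'.im * (x - a)) :
    IsBoundedUnder (· ≤ ·) (𝓝[s] a) (solutionRadius ∘ u) := by
  set c := |u'.im| / 2
  have hc : 0 < c := by positivity
  have htangent := (hasDerivAt_iff_isLittleO.1 hu).bound hc
  refine isBoundedUnder_of_eventually_le (a := (‖u'‖ + c) ^ 2 / (2 * c)) ?_
  filter_upwards [self_mem_nhdsWithin, nhdsWithin_le_nhds htangent,
    nhdsWithin_le_nhds (Metric.ball_mem_nhds a one_pos)] with x hxs hx hx1
  rw [ha, sub_zero, Real.norm_eq_abs] at hx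
  set t := |x - a|
  have hsign := hs x hxs
  have ht : 0 < t := abs_pos.2 (right_ne_zero_of_mul hsign.ne')
  have ht1 : t ≤ 1 := (Real.dist_eq x a ▸ Metric.mem_ball.1 hx1).le
  have hnorm : ‖u x‖ ≤ (‖u'‖ + c) * t :=
    calc ‖u x‖ ≤ ‖(x - a) • u'‖ + ‖u x - (x - a) • u'‖ := norm_le_insert' _ _
      _ ≤ t * ‖u'‖ + c * t := by rw [norm_smul, Real.norm_eq_abs]; gcongr
      _ = (‖u'‖ + c) * t := by ring
  have hlinear : u'.im * (x - a) = 2 * c * t := by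
    rw [← abs_of_pos hsign, abs_mul]; ring
  have hgrowth : c * t ≤ (u x).im := by
    have hdev := (Complex.abs_im_le_norm _).trans hx
    rw [Complex.sub_im, Complex.real_smul, Complex.im_ofReal_mul] at hdev
    linarith [abs_le.1 hdev]
  calc (solutionRadius ∘ u) x ≤ (‖u'‖ + c) ^ 2 * t / (2 * c) :=
        solutionRadius_le hc ht hnorm hgrowth
    _ ≤ (‖u'‖ + c) ^ 2 / (2 * c) := by
      gcongr
      exact mul_le_of_le_one_right (by positivity) ht1

/-- A C¹ curve u₀ = v₀ + i w₀ on [-1,1] vanishing at ±1, with w₀ > 0 inside and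
    Hopf-type boundary conditions w₀'(-1) > 0, w₀'(1) < 0, is contained in a
    solution disk of finite radius: sup (v₀² + w₀²)/(2 w₀) < ∞. -/
theorem curve_in_solution_disk (u₀ : ℝ → ℂ) (hC1 : ContDiff ℝ 1 u₀)
    (hm : u₀ (-1) = 0) (hp : u₀ 1 = 0)
    (hpos : ∀ x ∈ Ioo (-1 : ℝ) 1, 0 < (u₀ x).im)
    (him : 0 < (deriv u₀ (-1)).im) (him' : (deriv u₀ 1).im < 0) :
    ∃ R : ℝ, ∀ x ∈ Ioo (-1 : ℝ) 1,
      ((u₀ x).re ^ 2 + (u₀ x).im ^ 2) / (2 * (u₀ x).im) ≤ R := by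
  have hdiff : Differentiable ℝ u₀ := hC1.differentiable one_ne_zero
  obtain ⟨R, hR⟩ : BddAbove ((solutionRadius ∘ u₀) '' Ioo (-1) 1) := by
    refine isCompact_Icc.bddAbove_image_of_isBoundedUnder Ioo_subset_Icc_self fun x hx => ?_
    rcases eq_endpoints_or_mem_Ioo_of_mem_Icc hx with rfl | rfl | hx
    · exact isBoundedUnder_solutionRadius_of_hasDerivAt (hdiff _).hasDerivAt hm him.ne'
        fun y hy => mul_pos him (by linarith [hy.1])
    · exact isBoundedUnder_solutionRadius_of_hasDerivAt (hdiff _).hasDerivAt hp him'.ne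
        fun y hy => mul_pos_of_neg_of_neg him' (by linarith [hy.2])
    · have hcont := (continuousAt_solutionRadius (hpos x hx).ne').comp hC1.continuous.continuousAt
      exact (hcont.tendsto.mono_left nhdsWithin_le_nhds).isBoundedUnder_le
  exact ⟨R, fun x hx => hR (mem_image_of_mem _ hx)⟩
end

section
/- Let X be a complex Banach space, U ⊆ ℂᴺ open connected containing 0, K ⊆ X compact, and Φ : ℝ₊ × U → K with Φ(t, 0) = 0 for all t > 0 and Φ(t, ·) holomorphic on U for each t > 0. Then there do not exist p₀ ∈ X with p₀ ≠ 0 and points qₙ ∈ U with qₙ → 0 and Φ(n, qₙ) = p₀ for all n ∈ ℕ; that is, no such compact-valued holomorphic family {Φ(n, ·) : U → K}_{n∈ℕ} with these properties exists. -/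
open Set Filter Topology

/-- Complex-time grow-up: a holomorphic-in-initial-data family Φ(t,·) with values in a
    compact set K, fixing 0, cannot witness an unstable direction Φ(n, qₙ) = p₀ ≠ 0
    with qₙ → 0; the hypotheses are contradictory. -/
theorem no_bounded_unstable_family {X : Type*} [NormedAddCommGroup X] [NormedSpace ℂ X]
    [CompleteSpace X] {N : ℕ} (U : Set (Fin N → ℂ)) (hU : IsOpen U)
    (hUc : IsConnected U) (h0U : (0 : Fin N → ℂ) ∈ U)
    (K : Set X) (hK : IsCompact K)
    (Φ : ℝ → (Fin N → ℂ) → X)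
    (hmap : ∀ t : ℝ, 0 < t → ∀ z ∈ U, Φ t z ∈ K)
    (hfix : ∀ t : ℝ, 0 < t → Φ t 0 = 0)
    (hhol : ∀ t : ℝ, 0 < t → DifferentiableOn ℂ (Φ t) U)
    (p₀ : X) (hp₀ : p₀ ≠ 0) (q : ℕ → Fin N → ℂ) (hqU : ∀ n, q n ∈ U)
    (hqlim : Tendsto q atTop (𝓝 0))
    (hunst : ∀ n : ℕ, Φ (n + 1 : ℕ) (q n) = p₀) :
    False := by
  -- a ball around 0 inside U
  obtain ⟨r, hr, hrU⟩ := Metric.isOpen_iff.1 hU 0 h0U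
  -- K is bounded
  obtain ⟨M, hM⟩ := hK.isBounded.subset_closedBall 0
  have hM0 : 0 ≤ M := by
    have := hM (hmap 1 one_pos 0 h0U)
    simpa using le_trans (norm_nonneg _) (by simpa [Metric.mem_closedBall] using this)
  have hp₀pos : 0 < ‖p₀‖ := norm_pos_iff.2 hp₀
  -- choose n with ‖q n‖ small
  have hsmall : 0 < min r (r * ‖p₀‖ / (2 * (M + 1))) := by
    refine lt_min hr (by positivity)
  have : ∀ᶠ n in atTop, ‖q n‖ < min r (r * ‖p₀‖ / (2 * (M + 1))) := by
    have h0 : Tendsto (fun n => ‖q n‖) atTop (𝓝 0) := by simpa using hqlim.norm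
    exact h0.eventually (eventually_lt_nhds hsmall)
  obtain ⟨n, hn⟩ := this.exists
  set t : ℝ := ((n : ℝ) + 1) with ht_def
  have ht : 0 < t := by positivity
  have hΦq : Φ t (q n) = p₀ := by
    have := hunst n
    simpa [ht_def, Nat.cast_add, Nat.cast_one] using this
  by_cases hq0 : q n = 0
  · exact hp₀ (by rw [← hΦq, hq0, hfix t ht])
  have hqpos : 0 < ‖q n‖ := norm_pos_iff.2 hq0
  set R : ℝ := r / ‖q n‖ with hR_def
  have hR1 : 1 < R := by
    rw [hR_def, lt_div_iff₀ hqpos, one_mul]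
    exact lt_of_lt_of_le hn (min_le_left _ _)
  set g : ℂ → X := fun w => Φ t (w • q n) with hg_def
  have hg0 : g 0 = 0 := by simp [hg_def, hfix t ht]
  have hmapsU : Set.MapsTo (fun w : ℂ => w • q n) (Metric.ball 0 R) U := by
    intro w hw
    apply hrU
    rw [Metric.mem_ball, dist_zero_right, norm_smul]
    rw [Metric.mem_ball, dist_zero_right] at hw
    calc ‖w‖ * ‖q n‖ < R * ‖q n‖ := by gcongr
      _ = r := by rw [hR_def, div_mul_cancel₀ _ hqpos.ne']
  have hd : DifferentiableOn ℂ g (Metric.ball 0 R) := by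
    apply (hhol t ht).comp _ hmapsU
    exact (Differentiable.differentiableOn (by fun_prop))
  have hmaps : Set.MapsTo g (Metric.ball 0 R) (Metric.ball (g 0) (M + 1)) := by
    intro w hw
    rw [hg0, Metric.mem_ball, dist_zero_right]
    have hgK : g w ∈ K := hmap t ht _ (hmapsU hw)
    have := hM hgK
    rw [Metric.mem_closedBall, dist_zero_right] at this
    linarith
  have h1 : (1 : ℂ) ∈ Metric.ball (0 : ℂ) R := by
    rw [Metric.mem_ball, dist_zero_right]; simpa using hR1
  have key := Complex.dist_le_div_mul_dist_of_mapsTo_ball hd (hmaps.mono_right Metric.ball_subset_closedBall) h1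
  have hg1 : g 1 = p₀ := by simp [hg_def, hΦq]
  rw [hg1, hg0, dist_zero_right] at key
  have hd10 : dist (1 : ℂ) 0 = 1 := by simp
  rw [hd10, mul_one] at key
  have hRval : (M + 1) / R = (M + 1) * ‖q n‖ / r := by
    rw [hR_def]; field_simp
  rw [hRval] at key
  have hqb : ‖q n‖ < r * ‖p₀‖ / (2 * (M + 1)) := lt_of_lt_of_le hn (min_le_right _ _)
  have : ‖p₀‖ < ‖p₀‖ := by
    calc ‖p₀‖ ≤ (M + 1) * ‖q n‖ / r := key
      _ < (M + 1) * (r * ‖p₀‖ / (2 * (M + 1))) / r := by gcongr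
      _ = ‖p₀‖ / 2 := by field_simp
      _ < ‖p₀‖ := by linarith
  exact lt_irrefl _ this
end

section
/- Let u₊ : [−1,1] → ℝ be a positive solution of u'' + u² = 0 with u(±1) = 0, u₊ ≢ 0, and let μ be the largest eigenvalue of the Sturm–Liouville operator L = d²/dx² + 2u₊(x) with Dirichlet boundary conditions on (−1,1). Then μ > π²/4. -/
/-!
Testing the variational principle with `Q = u₊` and using `u₊'' = -u₊²` gives
`∫ u₊'² ≤ μ ∫ u₊²`, so it suffices to prove the strict Wirtinger inequality
`(π²/4) ∫ u² < ∫ u'²` for `u` vanishing at `±1` and not a multiple of `c x = cos (π x / 2)`.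
This follows from Picone's identity `u'² - (π²/4) u² = (u' - (c'/c) u)² + ((c'/c) u²)'`:
the boundary term vanishes at `±1` because `u = O(1 - |x|)` while `c ≥ 1 - |x|`, and equality
would force `(u / c)' = (u' - (c'/c) u) / c` to vanish. Finally `u₊ = k c` is impossible: then
`u₊'' = -(π²/4) u₊`, which together with `u₊'' = -u₊²` and `u₊ > 0` makes `u₊` constant.
-/

open Set intervalIntegral Real Filter Topology

lemma eqOn_zero_of_hasDerivAt_nonneg_of_le {f f' : ℝ → ℝ} {a b : ℝ}
    (hf : ContinuousOn f (Icc a b)) (hf' : ∀ x ∈ Ioo a b, HasDerivAt f (f' x) x)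
    (hf'₀ : ∀ x ∈ Ioo a b, 0 ≤ f' x) (hba : f b ≤ f a) : EqOn f' 0 (Ioo a b) := by
  have hmono : MonotoneOn f (Icc a b) :=
    monotoneOn_of_hasDerivWithinAt_nonneg (convex_Icc a b) hf
      (by simpa only [interior_Icc] using fun x hx => (hf' x hx).hasDerivWithinAt)
      (by simpa only [interior_Icc] using hf'₀)
  intro x hx
  have hab : a ≤ b := (hx.1.trans hx.2).le
  have hconst : f =ᶠ[𝓝 x] fun _ => f a := by
    filter_upwards [isOpen_Ioo.mem_nhds hx] with y hy
    exact le_antisymm ((hmono (Ioo_subset_Icc_self hy) (right_mem_Icc.2 hab) hy.2.le).trans hba)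
      (hmono (left_mem_Icc.2 hab) (Ioo_subset_Icc_self hy) hy.1.le)
  exact (hf' x hx).unique ((hasDerivAt_const x (f a)).congr_of_eventuallyEq hconst)

lemma cos_pi_mul_div_two_pos {x : ℝ} (hx : x ∈ Ioo (-1 : ℝ) 1) : 0 < cos (π * x / 2) :=
  cos_pos_of_mem_Ioo ⟨by nlinarith [pi_pos, hx.1], by nlinarith [pi_pos, hx.2]⟩

lemma one_sub_abs_le_cos_pi_mul_div_two {x : ℝ} (hx : |x| ≤ 1) : 1 - |x| ≤ cos (π * x / 2) := by
  have hcos : cos (π * x / 2) = cos (π * |x| / 2) := by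
    rw [← cos_abs, abs_div, abs_mul, abs_of_pos pi_pos, abs_two]
  have h := one_sub_mul_le_cos (x := π * |x| / 2) (by positivity) (by nlinarith [pi_pos])
  rwa [← hcos, show 2 / π * (π * |x| / 2) = |x| by field_simp] at h

lemma abs_le_mul_one_sub_abs {u : ℝ → ℝ} {C x : ℝ} (hu : Differentiable ℝ u)
    (hC : ∀ y ∈ Icc (-1 : ℝ) 1, ‖deriv u y‖ ≤ C) (hm : u (-1) = 0) (hp : u 1 = 0)
    (hx : x ∈ Icc (-1 : ℝ) 1) : |u x| ≤ C * (1 - |x|) := by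
  have hlip {y : ℝ} (hy : y ∈ Icc (-1 : ℝ) 1) : |u x - u y| ≤ C * |x - y| :=
    (convex_Icc (-1 : ℝ) 1).norm_image_sub_le_of_norm_deriv_le (fun z _ => hu z) hC hy hx
  rcases le_total 0 x with h | h
  · simpa [hp, abs_of_nonneg h, abs_of_nonpos (by linarith [hx.2] : x - 1 ≤ 0)]
      using hlip (right_mem_Icc.2 (by norm_num))
  · simpa [hm, abs_of_nonpos h, abs_of_nonneg (by linarith [hx.1] : 0 ≤ x + 1), add_comm]
      using hlip (left_mem_Icc.2 (by norm_num))

lemma hasDerivAt_pi_mul_div_two (x : ℝ) : HasDerivAt (fun y => π * y / 2) (π / 2) x := by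
  simpa using ((hasDerivAt_id x).const_mul π).div_const 2

/-- With `c x = cos (π x / 2)` this is `-(c' / c) u²`, the boundary term of Picone's identity. -/
noncomputable def piconeTerm (u : ℝ → ℝ) (x : ℝ) : ℝ := π / 2 * tan (π * x / 2) * u x ^ 2

lemma hasDerivAt_piconeTerm {u : ℝ → ℝ} {x : ℝ} (hu : DifferentiableAt ℝ u x)
    (hx : cos (π * x / 2) ≠ 0) :
    HasDerivAt (piconeTerm u)
      ((deriv u x + π / 2 * tan (π * x / 2) * u x) ^ 2 - (deriv u x ^ 2 - π ^ 2 / 4 * u x ^ 2))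
      x := by
  have htan := (hasDerivAt_tan hx).comp x (hasDerivAt_pi_mul_div_two x)
  refine ((htan.const_mul (π / 2)).mul (hu.hasDerivAt.pow 2)).congr_deriv ?_
  simp only [Function.comp_apply, Pi.pow_apply, tan_eq_sin_div_cos]
  field_simp
  linear_combination (-4 * π ^ 2 * u x ^ 2) * sin_sq_add_cos_sq (π * x / 2)

lemma hasDerivAt_div_cos_pi_mul_div_two {u : ℝ → ℝ} {x : ℝ} (hu : DifferentiableAt ℝ u x)
    (hx : cos (π * x / 2) ≠ 0) :
    HasDerivAt (fun y => u y / cos (π * y / 2))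
      ((deriv u x + π / 2 * tan (π * x / 2) * u x) / cos (π * x / 2)) x := by
  refine (hu.hasDerivAt.div (hasDerivAt_pi_mul_div_two x).cos hx).congr_deriv ?_
  rw [tan_eq_sin_div_cos]
  field_simp
  ring

lemma abs_piconeTerm_le {u : ℝ → ℝ} {C x : ℝ} (hu : Differentiable ℝ u)
    (hC : ∀ y ∈ Icc (-1 : ℝ) 1, ‖deriv u y‖ ≤ C) (hm : u (-1) = 0) (hp : u 1 = 0)
    (hx : x ∈ Icc (-1 : ℝ) 1) : |piconeTerm u x| ≤ π / 2 * C ^ 2 * (1 - |x|) := by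
  have hx' : |x| ≤ 1 := abs_le.2 hx
  have hd : 0 ≤ 1 - |x| := sub_nonneg.2 hx'
  have hcos := one_sub_abs_le_cos_pi_mul_div_two hx'
  have hu2 : u x ^ 2 ≤ C ^ 2 * (1 - |x|) * cos (π * x / 2) := by
    calc u x ^ 2 = |u x| ^ 2 := (sq_abs _).symm
      _ ≤ (C * (1 - |x|)) ^ 2 := by
        gcongr; exact abs_le_mul_one_sub_abs hu hC hm hp hx
      _ = C ^ 2 * (1 - |x|) * (1 - |x|) := by ring
      _ ≤ C ^ 2 * (1 - |x|) * cos (π * x / 2) := by gcongr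
  have hG : |piconeTerm u x| = π / 2 * (|sin (π * x / 2)| * u x ^ 2 / cos (π * x / 2)) := by
    rw [piconeTerm, tan_eq_sin_div_cos, abs_mul, abs_mul, abs_div, abs_div, abs_of_pos pi_pos,
      abs_two, abs_of_nonneg (hd.trans hcos), abs_sq]
    ring
  rw [hG, mul_assoc]
  gcongr
  refine div_le_of_le_mul₀ (hd.trans hcos) (by positivity) (le_trans ?_ hu2)
  exact mul_le_of_le_one_left (sq_nonneg _) (abs_sin_le_one _)

lemma continuousOn_piconeTerm {u : ℝ → ℝ} (hu : ContDiff ℝ 1 u) (hm : u (-1) = 0) (hp : u 1 = 0) :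
    ContinuousOn (piconeTerm u) (Icc (-1) 1) := by
  have hud : Differentiable ℝ u := hu.differentiable one_ne_zero
  obtain ⟨C, hC⟩ := isCompact_Icc.exists_bound_of_continuousOn
    (hu.continuous_deriv le_rfl).continuousOn (s := Icc (-1 : ℝ) 1)
  have hbound {x : ℝ} (hx : x ∈ Icc (-1 : ℝ) 1) := abs_piconeTerm_le hud hC hm hp hx
  intro x hx
  rcases (abs_le.2 hx).lt_or_eq with hlt | heq
  · have hx' : x ∈ Ioo (-1 : ℝ) 1 := abs_lt.1 hlt
    exact (hasDerivAt_piconeTerm (hud x)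
      (cos_pi_mul_div_two_pos hx').ne').continuousAt.continuousWithinAt
  · have h0 : piconeTerm u x = 0 := by
      simpa [heq] using hbound hx
    rw [ContinuousWithinAt, h0]
    refine squeeze_zero_norm' ?_ (a := fun y => π / 2 * C ^ 2 * (1 - |y|)) ?_
    · filter_upwards [self_mem_nhdsWithin] with y hy using hbound hy
    · have hg : Continuous fun y : ℝ => π / 2 * C ^ 2 * (1 - |y|) := by fun_prop
      simpa [heq] using hg.continuousWithinAt (s := Icc (-1) 1) (x := x) |>.tendsto

theorem pi_sq_div_four_mul_integral_sq_lt_integral_deriv_sq {u : ℝ → ℝ} (hu : ContDiff ℝ 1 u)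
    (hm : u (-1) = 0) (hp : u 1 = 0)
    (hne : ¬∃ k : ℝ, ∀ x ∈ Ioo (-1 : ℝ) 1, u x = k * cos (π * x / 2)) :
    π ^ 2 / 4 * ∫ x in (-1 : ℝ)..1, u x ^ 2 < ∫ x in (-1 : ℝ)..1, deriv u x ^ 2 := by
  have hud : Differentiable ℝ u := hu.differentiable one_ne_zero
  have hu' : Continuous (deriv u) := hu.continuous_deriv le_rfl
  have hf : Continuous fun x => deriv u x ^ 2 - π ^ 2 / 4 * u x ^ 2 := by
    have := hu.continuous; fun_prop
  set F := fun x => (∫ t in (-1 : ℝ)..x, (deriv u t ^ 2 - π ^ 2 / 4 * u t ^ 2)) + piconeTerm u x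
  have hF : ∀ x ∈ Ioo (-1 : ℝ) 1,
      HasDerivAt F ((deriv u x + π / 2 * tan (π * x / 2) * u x) ^ 2) x := fun x hx =>
    ((hf.integral_hasStrictDerivAt (-1) x).hasDerivAt.add
      (hasDerivAt_piconeTerm (hud x) (cos_pi_mul_div_two_pos hx).ne')).congr_deriv (by ring)
  have hFc : ContinuousOn F (Icc (-1) 1) :=
    (continuous_primitive (fun _ _ => hf.intervalIntegrable _ _) (-1)).continuousOn.add
      (continuousOn_piconeTerm hu hm hp)
  have hsplit : ∫ x in (-1 : ℝ)..1, (deriv u x ^ 2 - π ^ 2 / 4 * u x ^ 2)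
      = (∫ x in (-1 : ℝ)..1, deriv u x ^ 2) - π ^ 2 / 4 * ∫ x in (-1 : ℝ)..1, u x ^ 2 := by
    have hi1 : IntervalIntegrable (fun x => deriv u x ^ 2) MeasureTheory.volume (-1) 1 :=
      (hu'.pow 2).intervalIntegrable _ _
    have hi2 : IntervalIntegrable (fun x => π ^ 2 / 4 * u x ^ 2) MeasureTheory.volume (-1) 1 :=
      (continuous_const.mul (hu.continuous.pow 2)).intervalIntegrable _ _
    rw [integral_sub hi1 hi2, integral_const_mul]
  rw [← sub_pos, ← hsplit]
  by_contra! hle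
  have hzero := eqOn_zero_of_hasDerivAt_nonneg_of_le hFc hF (fun _ _ => sq_nonneg _)
    (by simpa [F, piconeTerm, hm, hp] using hle)
  apply hne
  obtain ⟨k, hk⟩ := isOpen_Ioo.exists_is_const_of_deriv_eq_zero isPreconnected_Ioo
    (f := fun y => u y / cos (π * y / 2))
    (fun x hx => (hasDerivAt_div_cos_pi_mul_div_two (hud x)
      (cos_pi_mul_div_two_pos hx).ne').differentiableAt.differentiableWithinAt)
    (fun x hx => by
      rw [(hasDerivAt_div_cos_pi_mul_div_two (hud x) (cos_pi_mul_div_two_pos hx).ne').deriv,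
        pow_eq_zero_iff two_ne_zero |>.1 (hzero hx), zero_div, Pi.zero_apply])
  exact ⟨k, fun x hx => by rw [← hk x hx, div_mul_cancel₀ _ (cos_pi_mul_div_two_pos hx).ne']⟩

lemma deriv_deriv_mul_cos_pi_mul_div_two (k x : ℝ) :
    deriv (deriv fun y => k * cos (π * y / 2)) x = -(π ^ 2 / 4) * (k * cos (π * x / 2)) := by
  have h1 : deriv (fun y => k * cos (π * y / 2)) = fun y => -(k * (π / 2)) * sin (π * y / 2) :=
    funext fun y => (((hasDerivAt_pi_mul_div_two y).cos.const_mul k).congr_deriv (by ring)).deriv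
  rw [h1, ((hasDerivAt_pi_mul_div_two x).sin.const_mul (-(k * (π / 2)))).deriv]
  ring

lemma not_exists_eq_mul_cos_of_deriv_deriv_add_sq_eq_zero {u : ℝ → ℝ}
    (hode : ∀ x ∈ Ioo (-1 : ℝ) 1, deriv (deriv u) x + u x ^ 2 = 0)
    (hpos : ∀ x ∈ Ioo (-1 : ℝ) 1, 0 < u x) :
    ¬∃ k : ℝ, ∀ x ∈ Ioo (-1 : ℝ) 1, u x = k * cos (π * x / 2) := by
  rintro ⟨k, hk⟩
  have hconst : ∀ x ∈ Ioo (-1 : ℝ) 1, u x = π ^ 2 / 4 := by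
    intro x hx
    have hev : u =ᶠ[𝓝 x] fun y => k * cos (π * y / 2) :=
      eventually_of_mem (isOpen_Ioo.mem_nhds hx) hk
    have h := hode x hx
    rw [hev.deriv.deriv_eq, deriv_deriv_mul_cos_pi_mul_div_two, ← hk x hx] at h
    have : u x * (u x - π ^ 2 / 4) = 0 := by linear_combination h
    exact sub_eq_zero.1 ((mul_eq_zero.1 this).resolve_left (hpos x hx).ne')
  have h0 : (0 : ℝ) ∈ Ioo (-1 : ℝ) 1 := by norm_num
  have h := hode 0 h0
  have hev : u =ᶠ[𝓝 0] fun _ => π ^ 2 / 4 := eventually_of_mem (isOpen_Ioo.mem_nhds h0) hconst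
  rw [hev.deriv.deriv_eq, hconst 0 h0] at h
  simp only [deriv_const', deriv_const, zero_add] at h
  exact absurd h (by positivity)

lemma integral_deriv_sq_add_mul_deriv_deriv_eq_zero {u : ℝ → ℝ} {a b : ℝ} (hu : ContDiff ℝ 2 u)
    (ha : u a = 0) (hb : u b = 0) :
    ∫ x in a..b, (deriv u x ^ 2 + u x * deriv (deriv u) x) = 0 := by
  have hu' : ContDiff ℝ 1 (deriv u) := hu.deriv'
  have hderiv : ∀ x ∈ uIcc a b, HasDerivAt (fun y => u y * deriv u y)
      (deriv u x ^ 2 + u x * deriv (deriv u) x) x := fun x _ =>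
    (((hu.differentiable two_ne_zero x).hasDerivAt).mul
      ((hu'.differentiable one_ne_zero x).hasDerivAt)).congr_deriv (by ring)
  have hcont : Continuous fun x => deriv u x ^ 2 + u x * deriv (deriv u) x := by
    have := hu.continuous; have := hu'.continuous; have := hu'.continuous_deriv le_rfl; fun_prop
  rw [integral_eq_sub_of_hasDerivAt hderiv (hcont.intervalIntegrable _ _), ha, hb]
  ring

lemma integral_neg_deriv_sq_add_two_mul_sq_eq_integral_deriv_sq {u : ℝ → ℝ} {a b : ℝ}
    (hab : a ≤ b) (hu : ContDiff ℝ 2 u)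
    (hode : ∀ x ∈ Icc a b, deriv (deriv u) x + u x ^ 2 = 0) (ha : u a = 0) (hb : u b = 0) :
    ∫ x in a..b, (-(deriv u x) ^ 2 + 2 * u x * u x ^ 2) = ∫ x in a..b, deriv u x ^ 2 := by
  have hu' : Continuous (deriv u) := hu.continuous_deriv (by norm_num)
  have hu'' : Continuous (deriv (deriv u)) := hu.deriv'.continuous_deriv le_rfl
  have hcu := hu.continuous
  calc _ = ∫ x in a..b, (deriv u x ^ 2 - 2 * (deriv u x ^ 2 + u x * deriv (deriv u) x)) := by
        refine integral_congr fun x hx => ?_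
        have h := hode x (by rwa [uIcc_of_le hab] at hx)
        linear_combination (2 * u x) * h
    _ = ∫ x in a..b, deriv u x ^ 2 := by
        rw [integral_sub ((by fun_prop : Continuous _).intervalIntegrable _ _)
            ((by fun_prop : Continuous _).intervalIntegrable _ _), integral_const_mul,
          integral_deriv_sq_add_mul_deriv_deriv_eq_zero hu ha hb, mul_zero, sub_zero]

/-- If uPlus is a positive Dirichlet solution of u'' + u² = 0 on (-1,1) and μ dominates
    the Rayleigh quotient of L = d²/dx² + 2uPlus over all C¹ Dirichlet test functions
    (variational characterization of the largest eigenvalue), then μ > π²/4. -/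
theorem principal_eigenvalue_gt (uPlus : ℝ → ℝ) (hC2 : ContDiff ℝ 2 uPlus)
    (hode : ∀ x ∈ Icc (-1 : ℝ) 1, deriv (deriv uPlus) x + (uPlus x) ^ 2 = 0)
    (hpos : ∀ x ∈ Ioo (-1 : ℝ) 1, 0 < uPlus x)
    (hm : uPlus (-1) = 0) (hp : uPlus 1 = 0)
    (μ : ℝ)
    (hray : ∀ Q : ℝ → ℝ, ContDiff ℝ 1 Q → Q (-1) = 0 → Q 1 = 0 →
      (∫ x in (-1 : ℝ)..1, (-(deriv Q x) ^ 2 + 2 * uPlus x * (Q x) ^ 2))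
        ≤ μ * ∫ x in (-1 : ℝ)..1, (Q x) ^ 2) :
    Real.pi ^ 2 / 4 < μ := by
  have hC1 : ContDiff ℝ 1 uPlus := hC2.of_le (by norm_num)
  have hnot_cos := not_exists_eq_mul_cos_of_deriv_deriv_add_sq_eq_zero
    (fun x hx => hode x (Ioo_subset_Icc_self hx)) hpos
  have hwirtinger := pi_sq_div_four_mul_integral_sq_lt_integral_deriv_sq hC1 hm hp hnot_cos
  have hrayleigh : ∫ x in (-1 : ℝ)..1, deriv uPlus x ^ 2 ≤ μ * ∫ x in (-1 : ℝ)..1, uPlus x ^ 2 :=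
    integral_neg_deriv_sq_add_two_mul_sq_eq_integral_deriv_sq (by norm_num) hC2 hode hm hp ▸
      hray uPlus hC1 hm hp
  exact lt_of_mul_lt_mul_right (hwirtinger.trans_le hrayleigh)
    (integral_nonneg (by norm_num) fun x _ => sq_nonneg _)
end

section
/- Let u : S → ℂ be holomorphic on the strip S = {t ∈ ℂ : 0 < Im t < δ} with values in the closed upper half-plane (Im u(t) ≥ 0). Then for every t ∈ S, |u(t) − u(t₀)| is controlled on sub-disks: for the disk D of radius δ/2 centered at t₀ = t* + iδ/2 (tangent to the real axis), if additionally Im u(t₀) ≤ α, then |u(t)| ≤ |u(t₀)| + 2α·(2|t − t₀|/δ)/(1 − 2|t − t₀|/δ) for t ∈ D. In particular there exists M > 0 with |u(t)| ≤ M/Im(t) for t approaching the real boundary nontangentially. -/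
/-!
For `f` holomorphic on a disk with values in the closed upper half-plane, the Cayley-type map
`w ↦ (w - f c) / (w - conj (f c))` sends the half-plane into the unit disk and `f c` to `0`, so
the Schwarz lemma bounds `|f z - f c|` by `r |f z - conj (f c)| ≤ r (|f z - f c| + 2 Im f c)`,
where `r` is the relative distance of `z` to the centre. When `Im f c = 0` this map degenerates,
so one applies it to `f + iε` and lets `ε → 0`. The disks of radius `δ / 2` tangent to the real
axis lie in the strip, which gives the bound there.
-/

open Metric Complex ComplexConjugate

namespace Complex

theorem dist_le_dist_conj {w a : ℂ} (hw : 0 ≤ w.im) (ha : 0 ≤ a.im) :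
    dist w a ≤ dist w (conj a) := by
  rw [dist_eq, dist_eq, ← sq_le_sq₀ (norm_nonneg _) (norm_nonneg _), Complex.sq_norm,
    Complex.sq_norm, normSq_apply, normSq_apply]
  simp only [sub_re, sub_im, conj_re, conj_im]
  nlinarith [mul_nonneg hw ha]

theorem dist_mul_one_sub_le_of_im_nonneg_of_im_pos {f : ℂ → ℂ} {c z : ℂ} {R : ℝ}
    (hd : DifferentiableOn ℂ f (ball c R)) (him : ∀ w ∈ ball c R, 0 ≤ (f w).im)
    (hc : 0 < (f c).im) (hz : z ∈ ball c R) :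
    dist (f z) (f c) * (1 - dist z c / R) ≤ 2 * (f c).im * (dist z c / R) := by
  set a := f c
  have hden : ∀ w ∈ ball c R, f w - conj a ≠ 0 := fun w hw h ↦ by
    have := congrArg im h
    simp only [sub_im, conj_im, zero_im] at this
    linarith [him w hw]
  set g : ℂ → ℂ := fun w ↦ (f w - a) / (f w - conj a)
  have hg_maps : Set.MapsTo g (ball c R) (closedBall (g c) 1) := fun w hw ↦ by
    rw [mem_closedBall, show g c = 0 by simp [g, a], dist_zero_right, norm_div, ← dist_eq,
      ← dist_eq]
    exact div_le_one_of_le₀ (dist_le_dist_conj (him w hw) hc.le) dist_nonneg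
  have hg_diff : DifferentiableOn ℂ g (ball c R) := (hd.sub_const a).div (hd.sub_const _) hden
  have hschwarz : dist (g z) (g c) ≤ dist z c / R := by
    simpa only [one_div_mul_eq_div] using dist_le_div_mul_dist_of_mapsTo_ball hg_diff hg_maps hz
  have hgz : dist (f z) a = dist (g z) (g c) * dist (f z) (conj a) := by
    rw [show g c = 0 by simp [g, a], dist_zero_right, dist_eq, dist_eq, norm_div,
      div_mul_cancel₀ _ (norm_ne_zero_iff.mpr (hden z hz))]
  have hR : 0 < R := pos_of_mem_ball hz
  have hkey : dist (f z) a ≤ dist z c / R * (dist (f z) a + 2 * a.im) :=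
    calc dist (f z) a = dist (g z) (g c) * dist (f z) (conj a) := hgz
      _ ≤ dist z c / R * (dist (f z) a + dist a (conj a)) :=
        mul_le_mul hschwarz (dist_triangle _ _ _) dist_nonneg (div_nonneg dist_nonneg hR.le)
      _ = dist z c / R * (dist (f z) a + 2 * a.im) := by rw [dist_self_conj, abs_of_pos hc]
  linarith

theorem dist_mul_one_sub_le_of_im_nonneg {f : ℂ → ℂ} {c z : ℂ} {R : ℝ}
    (hd : DifferentiableOn ℂ f (ball c R)) (him : ∀ w ∈ ball c R, 0 ≤ (f w).im)
    (hz : z ∈ ball c R) :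
    dist (f z) (f c) * (1 - dist z c / R) ≤ 2 * (f c).im * (dist z c / R) := by
  have hr : dist z c / R < 1 := (div_lt_one (pos_of_mem_ball hz)).mpr hz
  refine le_of_forall_pos_le_add fun ε hε ↦ ?_
  have hc : 0 ≤ (f c).im := him c (mem_ball_self (pos_of_mem_ball hz))
  have hshift := dist_mul_one_sub_le_of_im_nonneg_of_im_pos
    (f := fun w ↦ f w + (ε / 2 : ℝ) * I) (hd.add_const _)
    (fun w hw ↦ by simpa using add_nonneg (him w hw) (half_pos hε).le)
    (by simpa using add_pos_of_nonneg_of_pos hc (half_pos hε)) hz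
  simp only [dist_add_right, add_im, mul_im, ofReal_re, ofReal_im, I_re, I_im] at hshift
  nlinarith [mul_le_mul_of_nonneg_left hr.le hε.le]

theorem ball_subset_strip (x δ : ℝ) :
    ball ((x : ℂ) + (δ / 2) * I) (δ / 2) ⊆ {t : ℂ | 0 < t.im ∧ t.im < δ} := by
  intro t ht
  have := (abs_im_le_norm _).trans_lt (mem_ball_iff_norm.mp ht)
  simp only [sub_im, add_im, ofReal_im, mul_im, div_ofNat_re, ofReal_re, I_im, mul_one,
    div_ofNat_im, zero_div, I_re, mul_zero, add_zero, zero_add] at this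
  constructor <;> cases abs_lt.mp this <;> linarith

end Complex

theorem strip_upper_half_plane_bound_general (δ : ℝ) (u : ℂ → ℂ)
    (hu : DifferentiableOn ℂ u {t : ℂ | 0 < t.im ∧ t.im < δ})
    (him : ∀ t : ℂ, 0 < t.im → t.im < δ → 0 ≤ (u t).im) :
    ∀ tstar : ℝ, ∀ α : ℝ, 0 < α →
      (u ((tstar : ℂ) + (δ / 2) * Complex.I)).im ≤ α →
      ∀ t ∈ ball ((tstar : ℂ) + (δ / 2) * Complex.I) (δ / 2),
        ‖u t‖ ≤ ‖u ((tstar : ℂ) + (δ / 2) * Complex.I)‖ +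
          2 * α * (2 * ‖t - ((tstar : ℂ) + (δ / 2) * Complex.I)‖ / δ) /
            (1 - 2 * ‖t - ((tstar : ℂ) + (δ / 2) * Complex.I)‖ / δ) := by
  intro tstar α _ hα t ht
  set t₀ : ℂ := (tstar : ℂ) + (δ / 2) * I
  have hδ : 0 < δ := by linarith [pos_of_mem_ball ht]
  have hsub := ball_subset_strip tstar δ
  have hρ : dist t t₀ / (δ / 2) = 2 * ‖t - t₀‖ / δ := by rw [dist_eq]; field_simp
  have hρ1 : 2 * ‖t - t₀‖ / δ < 1 := hρ ▸ (div_lt_one (pos_of_mem_ball ht)).mpr ht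
  have key := dist_mul_one_sub_le_of_im_nonneg (hu.mono hsub)
    (fun w hw ↦ him w (hsub hw).1 (hsub hw).2) ht
  rw [hρ] at key
  calc ‖u t‖ ≤ ‖u t₀‖ + dist (u t) (u t₀) :=
        dist_eq_norm (u t) _ ▸ norm_le_norm_add_norm_sub' _ _
    _ ≤ ‖u t₀‖ + 2 * α * (2 * ‖t - t₀‖ / δ) / (1 - 2 * ‖t - t₀‖ / δ) := by
      gcongr _ + ?_
      rw [le_div_iff₀ (sub_pos.mpr hρ1)]
      exact key.trans (by gcongr)

/-- Upper blow-up rate estimate via subordination: a holomorphic function on the strip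
    {0 < Im t < δ} with values in the closed upper half-plane satisfies, on the disk of
    radius δ/2 tangent to the real axis at t* with center t₀ = t* + iδ/2 where
    Im u(t₀) ≤ α, the bound |u(t)| ≤ |u(t₀)| + 2α ρ/(1-ρ), ρ = 2|t-t₀|/δ. -/
theorem strip_upper_half_plane_bound (δ : ℝ) (hδ : 0 < δ) (u : ℂ → ℂ)
    (hu : DifferentiableOn ℂ u {t : ℂ | 0 < t.im ∧ t.im < δ})
    (him : ∀ t : ℂ, 0 < t.im → t.im < δ → 0 ≤ (u t).im) :
    ∀ tstar : ℝ, ∀ α : ℝ, 0 < α →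
      (u ((tstar : ℂ) + (δ / 2) * Complex.I)).im ≤ α →
      ∀ t ∈ ball ((tstar : ℂ) + (δ / 2) * Complex.I) (δ / 2),
        ‖u t‖ ≤ ‖u ((tstar : ℂ) + (δ / 2) * Complex.I)‖ +
          2 * α * (2 * ‖t - ((tstar : ℂ) + (δ / 2) * Complex.I)‖ / δ) /
            (1 - 2 * ‖t - ((tstar : ℂ) + (δ / 2) * Complex.I)‖ / δ) :=
  strip_upper_half_plane_bound_general δ u hu him
end
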